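/- arXiv:1506.07203 — 10 statements merged into one kernel-verified Lean document; each statement's English description precedes it below -/
import Mathlib

section
/- Every range-compatible linear map on the full space of linear maps L(U,V) is local: if F : L(U,V) → V is linear and F(s) ∈ range(s) for all s, then there exists x ∈ U such that F(s) = s(x) for all s ∈ L(U,V). -/
/-- Every range-compatible linear map on the full space `L(U,V)` is local. -/
theorem rangeCompatible_linear_on_full_space_is_local
    (K : Type*) [Field K] (U V : Type*) [AddCommGroup U] [Module K U]
    [AddCommGroup V] [Module K V] [FiniteDimensional K U] [FiniteDimensional K V]
    (F : (U →ₗ[K] V) →ₗ[K] V)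
    (hrc : ∀ s : U →ₗ[K] V, F s ∈ LinearMap.range s) :
    ∃ x : U, ∀ s : U →ₗ[K] V, F s = s x := by
  classical
  rcases subsingleton_or_nontrivial V with hV | hV
  · exact ⟨0, fun s => Subsingleton.elim _ _⟩
  -- For each nonzero v, there is x_v with F (φ.smulRight v) = φ x_v • v for all φ
  have key : ∀ v : V, v ≠ 0 →
      ∃ x : U, ∀ φ : Module.Dual K U, F (φ.smulRight v) = φ x • v := by
    intro v hv
    obtain ⟨ψ₀, hψ₀⟩ : ∃ ψ : Module.Dual K V, ψ v ≠ 0 := by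
      by_contra h
      push_neg at h
      exact hv ((Module.forall_dual_apply_eq_zero_iff K v).mp h)
    set ψ : Module.Dual K V := (ψ₀ v)⁻¹ • ψ₀ with hψdef
    have hψ : ψ v = 1 := by
      simp [hψdef, inv_mul_cancel₀ hψ₀]
    let T : Module.Dual K U →ₗ[K] (U →ₗ[K] V) :=
      { toFun := fun φ => φ.smulRight v
        map_add' := by
          intro φ₁ φ₂; ext u; simp [add_smul]
        map_smul' := by
          intro c φ; ext u; simp [mul_smul] }
    refine ⟨(Module.evalEquiv K U).symm (ψ ∘ₗ F ∘ₗ T), fun φ => ?_⟩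
    obtain ⟨u, hu⟩ := hrc (φ.smulRight v)
    have hc : F (φ.smulRight v) = φ u • v := by
      rw [← hu]; rfl
    have hφx : φ ((Module.evalEquiv K U).symm (ψ ∘ₗ F ∘ₗ T)) =
        ψ (F (φ.smulRight v)) := by
      rw [Module.apply_evalEquiv_symm_apply]; rfl
    rw [hφx, hc]
    simp [hψ]
  obtain ⟨v₀, hv₀⟩ := exists_ne (0 : V)
  obtain ⟨x, hx⟩ := key v₀ hv₀
  -- x works for every v
  have hx' : ∀ (v : V) (φ : Module.Dual K U), F (φ.smulRight v) = φ x • v := by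
    intro v φ
    by_cases hv : v = 0
    · subst hv
      have : (φ.smulRight (0 : V)) = 0 := by ext u; simp
      rw [this]; simp
    obtain ⟨y, hy⟩ := key v hv
    suffices h : y = x by rw [← h]; exact hy φ
    rw [← sub_eq_zero, ← Module.forall_dual_apply_eq_zero_iff K (y - x)]
    intro χ
    rw [map_sub, sub_eq_zero]
    by_cases hdep : ∃ c : K, v = c • v₀
    · obtain ⟨c, rfl⟩ := hdep
      have hc : c ≠ 0 := by rintro rfl; exact hv (zero_smul K v₀)
      have h1 : (χ.smulRight (c • v₀)) = c • χ.smulRight v₀ := by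
        ext u
        simp only [LinearMap.smulRight_apply, LinearMap.smul_apply]
        rw [smul_comm]
      have h2 : F (χ.smulRight (c • v₀)) = c • (χ x • v₀) := by
        rw [h1, map_smul, hx]
      have h3 := hy χ
      rw [h2] at h3
      have : (χ y - χ x) • (c • v₀) = 0 := by
        rw [sub_smul, ← h3]
        module
      have hcv : (c : K) • v₀ ≠ 0 := hv
      rcases smul_eq_zero.mp this with h | h
      · exact sub_eq_zero.mp h
      · exact absurd h hcv
    · -- v and v₀ are linearly independent
      push_neg at hdep
      have hvv₀ : v + v₀ ≠ 0 := by
        intro h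
        exact hdep (-1) (by rw [neg_one_smul, eq_comm, neg_eq_iff_add_eq_zero, add_comm]; exact h)
      obtain ⟨z, hz⟩ := key (v + v₀) hvv₀
      have hsplit : (χ.smulRight (v + v₀)) = χ.smulRight v + χ.smulRight v₀ := by
        ext u; simp [smul_add]
      have h1 : χ z • (v + v₀) = χ y • v + χ x • v₀ := by
        rw [← hz χ, hsplit, map_add, hy, hx]
      have h2 : (χ z - χ y) • v + (χ z - χ x) • v₀ = 0 := by
        linear_combination (norm := module) h1
      -- independence
      have hza : χ z - χ y = 0 := by
        by_contra ha
        apply hdep (-(χ z - χ y)⁻¹ * (χ z - χ x))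
        have := h2
        rw [add_eq_zero_iff_eq_neg] at this
        have hv' : v = (χ z - χ y)⁻¹ • (-((χ z - χ x) • v₀)) := by
          rw [← this, smul_smul, inv_mul_cancel₀ ha, one_smul]
        rw [hv']
        simp [smul_smul, mul_comm]
      have hzb : χ z - χ x = 0 := by
        rw [hza, zero_smul, zero_add] at h2
        rcases smul_eq_zero.mp h2 with h | h
        · exact h
        · exact absurd h hv₀
      have e1 := sub_eq_zero.mp hza
      have e2 := sub_eq_zero.mp hzb
      rw [← e1, e2]
  -- decompose an arbitrary s over a basis of V
  refine ⟨x, fun s => ?_⟩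
  set b := Module.finBasis K V with hb
  have hs : s = ∑ i, ((b.coord i) ∘ₗ s).smulRight (b i) := by
    ext u
    simp only [LinearMap.coe_sum, Finset.sum_apply, LinearMap.smulRight_apply,
      LinearMap.comp_apply, Module.Basis.coord_apply]
    exact (b.sum_repr (s u)).symm
  calc F s = ∑ i, F (((b.coord i) ∘ₗ s).smulRight (b i)) := by rw [← map_sum, ← hs]
    _ = ∑ i, ((b.coord i) ∘ₗ s) x • b i := by
        refine Finset.sum_congr rfl fun i _ => ?_
        exact hx' (b i) ((b.coord i) ∘ₗ s)
    _ = s x := by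
        simp only [LinearMap.comp_apply, Module.Basis.coord_apply]
        exact b.sum_repr (s x)
end

section
/- Every range-compatible additive group homomorphism F : Λ³(K) → K³ on the space of 3×3 alternating matrices over a field K is local: there exists X ∈ K³ such that F(A) = A·X for all alternating A ∈ M₃(K). -/
open Matrix

/-!
Alternating `3 × 3` matrices are exactly the cross-product matrices `[a]ₓ`, `[a]ₓ v = a ⨯₃ v`,
and the range of `[a]ₓ` is orthogonal to `a`. Hence `G a := F [a]ₓ` is additive with
`a ⬝ᵥ G a = 0`. Polarizing this identity shows that `G` is linear, given by a matrix which is again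
alternating, say `[m]ₓ`; then `F [a]ₓ = m ⨯₃ a = [a]ₓ (-m)`.
-/

section Polarization

variable {K n : Type*} [CommRing K] [Fintype n]

theorem dotProduct_map_eq_neg_of_dotProduct_map_self (G : (n → K) →+ (n → K))
    (hG : ∀ v, v ⬝ᵥ G v = 0) (a b : n → K) : a ⬝ᵥ G b = -(b ⬝ᵥ G a) := by
  have h := hG (a + b)
  rw [map_add, add_dotProduct, dotProduct_add, dotProduct_add, hG a, hG b] at h
  linear_combination h

variable [DecidableEq n]

theorem Matrix.apply_eq_neg_apply_of_dotProduct_mulVec_self {A : Matrix n n K}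
    (hA : ∀ X, X ⬝ᵥ A *ᵥ X = 0) (i j : n) : A i j = -A j i := by
  simpa [mulVec_single_one, single_dotProduct] using
    dotProduct_map_eq_neg_of_dotProduct_map_self A.mulVecLin.toAddMonoidHom hA
      (Pi.single i 1) (Pi.single j 1)

theorem Matrix.diag_eq_zero_of_dotProduct_mulVec_self {A : Matrix n n K}
    (hA : ∀ X, X ⬝ᵥ A *ᵥ X = 0) (i : n) : A i i = 0 := by
  simpa [mulVec_single_one, single_dotProduct] using hA (Pi.single i 1)

/-- Polarization makes `b ↦ a ⬝ᵥ G b` as linear as `a ↦ b ⬝ᵥ G a`. -/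
theorem exists_mulVec_eq_of_dotProduct_map_self (G : (n → K) →+ (n → K))
    (hG : ∀ v, v ⬝ᵥ G v = 0) : ∃ M : Matrix n n K, ∀ v, G v = M *ᵥ v := by
  refine ⟨-Matrix.of fun i j => G (Pi.single i 1) j, fun v => funext fun i => ?_⟩
  calc G v i = Pi.single i 1 ⬝ᵥ G v := by rw [single_dotProduct, one_mul]
    _ = -(v ⬝ᵥ G (Pi.single i 1)) := dotProduct_map_eq_neg_of_dotProduct_map_self G hG _ _
    _ = _ := by simp [mulVec, dotProduct, mul_comm]

end Polarization

section CrossMatrix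

variable {K : Type*} [CommRing K]

def crossMatrix : (Fin 3 → K) →ₗ[K] Matrix (Fin 3) (Fin 3) K :=
  LinearMap.toMatrix'.toLinearMap ∘ₗ crossProduct

theorem crossMatrix_mulVec (a v : Fin 3 → K) : crossMatrix a *ᵥ v = a ⨯₃ v := by
  simp [crossMatrix, LinearMap.toMatrix'_mulVec]

theorem dotProduct_crossMatrix_mulVec_self (a v : Fin 3 → K) : v ⬝ᵥ crossMatrix a *ᵥ v = 0 := by
  rw [crossMatrix_mulVec, dot_cross_self]

theorem exists_eq_crossMatrix_of_dotProduct_mulVec_self {A : Matrix (Fin 3) (Fin 3) K}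
    (hA : ∀ X, X ⬝ᵥ A *ᵥ X = 0) : ∃ a, A = crossMatrix a := by
  refine ⟨![A 2 1, A 0 2, A 1 0], ?_⟩
  have hskew := A.apply_eq_neg_apply_of_dotProduct_mulVec_self hA
  have hdiag := A.diag_eq_zero_of_dotProduct_mulVec_self hA
  ext i j
  fin_cases i <;> fin_cases j <;>
    simp [crossMatrix, LinearMap.toMatrix'_apply, cross_apply, hdiag, hskew 0 1, hskew 0 2,
      hskew 1 2]

end CrossMatrix

/-- Every range-compatible additive map on the space of 3×3 alternating
matrices over a field is local. -/
theorem rangeCompatible_hom_on_alt3_is_local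
    (K : Type*) [Field K]
    (F : Matrix (Fin 3) (Fin 3) K → (Fin 3 → K))
    (hadd : ∀ A B : Matrix (Fin 3) (Fin 3) K,
      (∀ X : Fin 3 → K, X ⬝ᵥ A.mulVec X = 0) →
      (∀ X : Fin 3 → K, X ⬝ᵥ B.mulVec X = 0) →
      F (A + B) = F A + F B)
    (hrc : ∀ A : Matrix (Fin 3) (Fin 3) K,
      (∀ X : Fin 3 → K, X ⬝ᵥ A.mulVec X = 0) →
      ∃ Y : Fin 3 → K, A.mulVec Y = F A) :
    ∃ X : Fin 3 → K, ∀ A : Matrix (Fin 3) (Fin 3) K,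
      (∀ Y : Fin 3 → K, Y ⬝ᵥ A.mulVec Y = 0) → F A = A.mulVec X := by
  let G : (Fin 3 → K) →+ (Fin 3 → K) := AddMonoidHom.mk' (fun a => F (crossMatrix a))
    fun a b => by
      simpa only [map_add] using hadd _ _ (dotProduct_crossMatrix_mulVec_self a)
        (dotProduct_crossMatrix_mulVec_self b)
  have hG : ∀ a, a ⬝ᵥ G a = 0 := fun a => by
    obtain ⟨Y, hY⟩ := hrc _ (dotProduct_crossMatrix_mulVec_self a)
    rw [AddMonoidHom.mk'_apply, ← hY, crossMatrix_mulVec, dot_self_cross]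
  obtain ⟨M, hM⟩ := exists_mulVec_eq_of_dotProduct_map_self G hG
  obtain ⟨m, rfl⟩ := exists_eq_crossMatrix_of_dotProduct_mulVec_self (A := M)
    fun v => by rw [← hM, hG]
  refine ⟨-m, fun A hA => ?_⟩
  obtain ⟨a, rfl⟩ := exists_eq_crossMatrix_of_dotProduct_mulVec_self hA
  calc F (crossMatrix a) = crossMatrix m *ᵥ a := hM a
    _ = crossMatrix a *ᵥ -m := by
      rw [crossMatrix_mulVec, crossMatrix_mulVec, map_neg, cross_anticomm]
end

section
/- Let K be a field and u,g,h,i,j,k : K → K additive group homomorphisms satisfying −u(a)c + g(b)c + h(a)b − i(c)b − j(b)a + k(c)a = 0 for all (a,b,c) ∈ K³. Then u, g, h, i, j, k are all K-linear, u(1) = k(1), g(1) = i(1), and h(1) = j(1). -/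
/-- If additive maps `u,g,h,i,j,k : K → K` satisfy the alternating identity,
then they are all linear and `u(1)=k(1)`, `g(1)=i(1)`, `h(1)=j(1)`. -/
theorem alt_identity_forces_linearity
    (K : Type*) [Field K] (u g h i j k : K →+ K)
    (hid : ∀ a b c : K,
      -(u a) * c + g b * c + h a * b - i c * b - j b * a + k c * a = 0) :
    (∀ lam x : K, u (lam * x) = lam * u x) ∧
    (∀ lam x : K, g (lam * x) = lam * g x) ∧
    (∀ lam x : K, h (lam * x) = lam * h x) ∧
    (∀ lam x : K, i (lam * x) = lam * i x) ∧
    (∀ lam x : K, j (lam * x) = lam * j x) ∧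
    (∀ lam x : K, k (lam * x) = lam * k x) ∧
    u 1 = k 1 ∧ g 1 = i 1 ∧ h 1 = j 1 := by
  have huk : ∀ a c : K, u a * c = k c * a := by
    intro a c
    have := hid a 0 c
    simp at this
    linear_combination -this
  have hgi : ∀ b c : K, g b * c = i c * b := by
    intro b c
    have := hid 0 b c
    simp at this
    linear_combination this
  have hhj : ∀ a b : K, h a * b = j b * a := by
    intro a b
    have := hid a b 0
    simp at this
    linear_combination this
  have hu : ∀ x : K, u x = k 1 * x := fun x => by have := huk x 1; simpa using this
  have hk : ∀ x : K, k x = u 1 * x := fun x => by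
    simpa using (huk 1 x).symm
  have hg : ∀ x : K, g x = i 1 * x := fun x => by have := hgi x 1; simpa using this
  have hi' : ∀ x : K, i x = g 1 * x := fun x => by
    simpa using (hgi 1 x).symm
  have hh : ∀ x : K, h x = j 1 * x := fun x => by have := hhj x 1; simpa using this
  have hj' : ∀ x : K, j x = h 1 * x := fun x => by
    simpa using (hhj 1 x).symm
  refine ⟨fun l x => by rw [hu, hu]; ring, fun l x => by rw [hg, hg]; ring,
    fun l x => by rw [hh, hh]; ring, fun l x => by rw [hi', hi']; ring,
    fun l x => by rw [hj', hj']; ring, fun l x => by rw [hk, hk]; ring,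
    ?_, ?_, ?_⟩
  · have := huk 1 1; simpa using this
  · have := hgi 1 1; simpa using this
  · have := hhj 1 1; simpa using this
end

section
/- Let n ≥ 3 and let W be a proper linear subspace of the space of symmetric n×n matrices over K. Then there exist two non-collinear vectors X₁, X₂ ∈ Kⁿ such that W contains no rank-1 matrix with column space equal to K·X₁ and no rank-1 matrix with column space equal to K·X₂. -/
/-!
Pick a symmetric `S ∉ W`. The matrices `x xᵀ` span all symmetric matrices, so some `x xᵀ` lies
outside `W`. Since `Q x = x xᵀ` is a quadratic map, the identity
`Q x = Q (x+h) + Q (h+h') + Q (h'+x) - Q (x+h+h') - Q h - Q h'` shows that if `Q y ∈ W` for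
every `y` not collinear with `x`, then also `Q x ∈ W`: for `n ≥ 3` choose `h, h'` independent
modulo `K x`, so that all six arguments on the right are non-collinear with `x`. This gives a
second vector `y` with `y yᵀ ∉ W`. Finally a symmetric matrix with range `K x` is a multiple
`a • x xᵀ`, so it lies in `W` only if `a = 0`.
-/

open Matrix Module Submodule

section

variable {K V N : Type*} [Field K] [AddCommGroup V] [Module K V] [AddCommGroup N] [Module K N]

theorem exists_linearIndependent_pair_mkQ_span_singleton [FiniteDimensional K V]
    (hV : 3 ≤ finrank K V) (x : V) :
    ∃ h h' : V, LinearIndependent K ![(K ∙ x).mkQ h, (K ∙ x).mkQ h'] := by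
  have hq : 1 < finrank K (V ⧸ K ∙ x) := by
    have := (K ∙ x).finrank_quotient_add_finrank
    have : finrank K (K ∙ x) ≤ 1 := (finrank_span_le_card {x}).trans (by simp)
    omega
  obtain ⟨u, hu⟩ := finrank_pos_iff_exists_ne_zero.1 (zero_lt_one.trans hq)
  obtain ⟨u', hind⟩ := exists_linearIndependent_pair_of_one_lt_finrank hq hu
  obtain ⟨h, rfl⟩ := (K ∙ x).mkQ_surjective u
  obtain ⟨h', rfl⟩ := (K ∙ x).mkQ_surjective u'
  exact ⟨h, h', hind⟩

namespace QuadraticMap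

theorem exists_notMem_span_singleton_apply_notMem_of_linearIndependent
    (Q : QuadraticMap K V N) (W : Submodule K N) {x h h' : V}
    (hind : LinearIndependent K ![(K ∙ x).mkQ h, (K ∙ x).mkQ h']) (hx : Q x ∉ W) :
    ∃ y ∉ K ∙ x, Q y ∉ W := by
  by_contra! hW
  have mem : ∀ y, (K ∙ x).mkQ y ≠ 0 → Q y ∈ W := fun y hy =>
    hW y (by rwa [Ne, mkQ_apply, Quotient.mk_eq_zero] at hy)
  have hh : (K ∙ x).mkQ h ≠ 0 := hind.ne_zero 0
  have hh' : (K ∙ x).mkQ h' ≠ 0 := hind.ne_zero 1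
  have hhh' : (K ∙ x).mkQ (h + h') ≠ 0 := by
    rw [map_add]
    intro h0
    simpa using (LinearIndependent.pair_iff.1 hind 1 1 (by simpa using h0)).1
  have hxq : (K ∙ x).mkQ x = 0 := by simp [mem_span_singleton_self]
  have key : Q x = Q (x + h) + Q (h + h') + Q (h' + x) - Q (x + h + h') - Q h - Q h' := by
    rw [← Q.map_add_add_add_map]; abel
  refine hx (key ▸ W.sub_mem (W.sub_mem (W.sub_mem (W.add_mem (W.add_mem ?_ ?_) ?_) ?_) ?_) ?_)
  -- modulo `K ∙ x` the six arguments are `h`, `h'` or `h + h'`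
  all_goals apply mem
  all_goals simpa only [map_add, hxq, zero_add, add_zero]

theorem exists_notMem_span_singleton_apply_notMem [FiniteDimensional K V]
    (Q : QuadraticMap K V N) (W : Submodule K N) (hV : 3 ≤ finrank K V) {x : V} (hx : Q x ∉ W) :
    ∃ y ∉ K ∙ x, Q y ∉ W :=
  let ⟨_, _, hind⟩ := exists_linearIndependent_pair_mkQ_span_singleton hV x
  Q.exists_notMem_span_singleton_apply_notMem_of_linearIndependent W hind hx

end QuadraticMap

end

namespace Matrix

variable {K ι : Type*}

theorem vecMulVec_add_vecMulVec_mem_span [CommRing K] (x y : ι → K) :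
    vecMulVec x y + vecMulVec y x ∈ span K (Set.range fun z : ι → K => vecMulVec z z) := by
  have hQ (z : ι → K) : vecMulVec z z ∈ span K (Set.range fun z : ι → K => vecMulVec z z) :=
    subset_span ⟨z, rfl⟩
  have : vecMulVec x y + vecMulVec y x =
      vecMulVec (x + y) (x + y) - vecMulVec x x - vecMulVec y y := by
    simp only [add_vecMulVec, vecMulVec_add]; abel
  rw [this]
  exact sub_mem (sub_mem (hQ _) (hQ _)) (hQ _)

theorem IsSymm.mem_span_range_vecMulVec_self [CommRing K] [Fintype ι] [LinearOrder ι]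
    {S : Matrix ι ι K} (hS : S.IsSymm) :
    S ∈ span K (Set.range fun z : ι → K => vecMulVec z z) := by
  -- `S = U + Uᵀ + diag S` with `U` strictly upper triangular, which avoids dividing by `2`
  set u : ι → ι → K := fun i j => if i < j then S i j else 0
  have hdecomp : S = ∑ i, (vecMulVec (Pi.single i 1) (u i) + vecMulVec (u i) (Pi.single i 1) +
      S i i • vecMulVec (Pi.single i 1) (Pi.single i 1)) := by
    ext a b
    simp only [u, sum_apply, add_apply, smul_apply, vecMulVec_apply, Pi.single_apply]
    simp only [Finset.sum_add_distrib, mul_ite, mul_one, mul_zero, ite_mul, one_mul, zero_mul,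
      smul_eq_mul, Finset.sum_ite_eq, Finset.mem_univ, if_true]
    rw [Finset.sum_eq_single a] <;> grind [hS.apply a b]
  rw [hdecomp]
  exact sum_mem fun i _ => add_mem (vecMulVec_add_vecMulVec_mem_span _ _)
    (smul_mem _ _ (subset_span ⟨_, rfl⟩))

theorem exists_eq_vecMulVec_of_range_mulVecLin_le {m : Type*} [CommRing K] [Fintype ι]
    [DecidableEq ι] {M : Matrix m ι K} {x : m → K} (h : LinearMap.range M.mulVecLin ≤ K ∙ x) :
    ∃ c : ι → K, M = vecMulVec x c := by
  have hcol : ∀ j, ∃ c : K, c • x = M.col j := fun j =>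
    mem_span_singleton.1 (h ⟨Pi.single j 1, mulVec_single_one M j⟩)
  choose c hc using hcol
  refine ⟨c, Matrix.ext fun i j => ?_⟩
  simpa [vecMulVec_apply, mul_comm] using (congrFun (hc j) i).symm

theorem IsSymm.exists_eq_smul_vecMulVec_self [Field K] [Fintype ι] [DecidableEq ι]
    {M : Matrix ι ι K} (hM : M.IsSymm) {x : ι → K} (h : LinearMap.range M.mulVecLin ≤ K ∙ x) :
    ∃ a : K, M = a • vecMulVec x x := by
  obtain ⟨c, rfl⟩ := exists_eq_vecMulVec_of_range_mulVecLin_le h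
  obtain rfl | ⟨i, hi : x i ≠ 0⟩ := eq_or_ne x 0 |>.imp_right Function.ne_iff.1
  · exact ⟨0, by simp⟩
  refine ⟨c i / x i, Matrix.ext fun k j => ?_⟩
  have hsymm : x j * c i = x i * c j := by simpa [vecMulVec_apply] using hM.apply i j
  simp only [smul_apply, vecMulVec_apply, smul_eq_mul]
  field_simp
  linear_combination -x k * hsymm

theorem IsSymm.range_mulVecLin_ne_span_singleton [Field K] [Fintype ι] [DecidableEq ι]
    {W : Submodule K (Matrix ι ι K)} {M : Matrix ι ι K} (hMW : M ∈ W) (hM : M.IsSymm)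
    {x : ι → K} (hx : vecMulVec x x ∉ W) : LinearMap.range M.mulVecLin ≠ K ∙ x := by
  intro hrange
  obtain ⟨a, rfl⟩ := hM.exists_eq_smul_vecMulVec_self hrange.le
  rcases eq_or_ne a 0 with rfl | ha
  · have : x = 0 := (span_singleton_eq_bot (R := K)).1 (by simpa using hrange.symm)
    simp [this] at hx
  · exact hx (by simpa [smul_smul, ha] using W.smul_mem a⁻¹ hMW)

end Matrix

/-- For a proper subspace `W` of the symmetric `n×n` matrices (`n ≥ 3`), there
exist two non-collinear vectors `X₁, X₂` such that `W` contains no rank-one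
matrix with range `K·X₁` and none with range `K·X₂`. -/
theorem proper_subspace_of_sym_misses_two_lines
    (K : Type*) [Field K] (n : ℕ) (hn : 3 ≤ n)
    (W : Submodule K (Matrix (Fin n) (Fin n) K))
    (hWsym : ∀ M ∈ W, M.IsSymm)
    (hproper : ∃ S : Matrix (Fin n) (Fin n) K, S.IsSymm ∧ S ∉ W) :
    ∃ X₁ X₂ : Fin n → K, LinearIndependent K ![X₁, X₂] ∧
      (∀ M ∈ W, M.rank = 1 →
        LinearMap.range M.mulVecLin ≠ Submodule.span K {X₁}) ∧
      (∀ M ∈ W, M.rank = 1 →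
        LinearMap.range M.mulVecLin ≠ Submodule.span K {X₂}) := by
  obtain ⟨S, hS, hSW⟩ := hproper
  obtain ⟨x, hx⟩ : ∃ x : Fin n → K, vecMulVec x x ∉ W := by
    by_contra! h
    exact hSW (span_le.2 (Set.range_subset_iff.2 h) hS.mem_span_range_vecMulVec_self)
  obtain ⟨y, hy, hyW⟩ := QuadraticMap.exists_notMem_span_singleton_apply_notMem
    (LinearMap.BilinMap.toQuadraticMap (vecMulVecBilin K K)) W (by simpa using hn) hx
  have hx0 : x ≠ 0 := by rintro rfl; simp at hx
  have hxy : LinearIndependent K ![x, y] :=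
    (LinearIndependent.pair_iff' hx0).2 fun a hxy => hy (mem_span_singleton.2 ⟨a, hxy⟩)
  exact ⟨x, y, hxy, fun M hM _ => (hWsym M hM).range_mulVecLin_ne_span_singleton hM hx,
    fun M hM _ => (hWsym M hM).range_mulVecLin_ne_span_singleton hM hyW⟩
end

section
/- Let n ≥ 3 and suppose M is a linear subspace of the symmetric n×n matrices over K containing X·Xᵀ for every X ∈ Kⁿ outside a fixed one-dimensional subspace K·X₀ where X₀ = (1,…,1)ᵀ. Then M equals the full space of symmetric n×n matrices. -/
/-! The rank-one matrices `eᵢeᵢᵀ` and `(eᵢ + eⱼ)(eᵢ + eⱼ)ᵀ` (`i ≠ j`) span the symmetric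
matrices without dividing by 2: `A = ∑ᵢ Aᵢᵢ Eᵢᵢ + ∑_{i<j} Aᵢⱼ (Eᵢⱼ + Eⱼᵢ)`. For `n ≥ 3` none
of the vectors `eᵢ`, `eᵢ + eⱼ` is constant, so all these matrices lie in `M`. -/

open Matrix

theorem Fintype.exists_ne_ne_of_two_lt_card {α : Type*} [Fintype α] (h : 2 < Fintype.card α)
    (i j : α) : ∃ k, k ≠ i ∧ k ≠ j := by
  classical
  obtain ⟨k, -, hk⟩ := Finset.exists_mem_notMem_of_card_lt_card (s := {i, j})
    (t := Finset.univ) (Finset.card_le_two.trans_lt (by simpa using h))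
  simp only [Finset.mem_insert, Finset.mem_singleton, not_or] at hk
  exact ⟨k, hk⟩

theorem notMem_span_const_one_of_ne {K ι : Type*} [Semiring K] {X : ι → K} {k l : ι}
    (h : X k ≠ X l) : X ∉ Submodule.span K {(fun _ => 1 : ι → K)} := by
  rw [Submodule.mem_span_singleton]
  rintro ⟨c, rfl⟩
  simp at h

namespace Matrix

variable {ι K : Type*}

def strictUpperPart [LinearOrder ι] [Zero K] (A : Matrix ι ι K) : Matrix ι ι K :=
  of fun i j => if i < j then A i j else 0

theorem IsSymm.eq_strictUpperPart_add_transpose_add_diagonal [LinearOrder ι] [AddMonoid K]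
    {A : Matrix ι ι K} (hA : A.IsSymm) :
    A = A.strictUpperPart + A.strictUpperPartᵀ + diagonal A.diag := by
  ext i j
  rcases lt_trichotomy i j with h | rfl | h
  · simp [strictUpperPart, h, h.ne, h.not_gt]
  · simp [strictUpperPart]
  · simp [strictUpperPart, h, h.ne', h.not_gt, hA.apply]

theorem add_transpose_eq_sum_smul_single_add_single [Fintype ι] [DecidableEq ι] [Semiring K]
    (B : Matrix ι ι K) :
    B + Bᵀ = ∑ i, ∑ j, B i j • (single i j 1 + single j i 1) := by
  conv_lhs => rw [matrix_eq_sum_single B]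
  simp [transpose_sum, transpose_single, smul_single, Finset.sum_add_distrib]

theorem IsSymm.mem_of_single_mem [Fintype ι] [LinearOrder ι] [Semiring K]
    {M : Submodule K (Matrix ι ι K)} (hdiag : ∀ i, single i i 1 ∈ M)
    (hoff : ∀ i j, i ≠ j → single i j 1 + single j i 1 ∈ M)
    {A : Matrix ι ι K} (hA : A.IsSymm) : A ∈ M := by
  rw [hA.eq_strictUpperPart_add_transpose_add_diagonal,
    add_transpose_eq_sum_smul_single_add_single, ← sum_single_eq_diagonal]
  refine M.add_mem (M.sum_mem fun i _ => M.sum_mem fun j _ => ?_)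
    (M.sum_mem fun i _ => ?_)
  · by_cases hij : i < j
    · exact M.smul_mem _ (hoff i j hij.ne)
    · simp [strictUpperPart, hij]
  · simpa [smul_single] using M.smul_mem (A i i) (hdiag i)

theorem single_add_single_eq_vecMulVec_sub [DecidableEq ι] [Ring K] (i j : ι) :
    single i j (1 : K) + single j i 1 =
      vecMulVec (Pi.single i 1 + Pi.single j 1) (Pi.single i 1 + Pi.single j 1) -
        single i i 1 - single j j 1 := by
  simp only [add_vecMulVec, vecMulVec_add, ← single_eq_single_vecMulVec_single]
  abel

end Matrix

theorem subspace_containing_almost_all_squares_is_full_general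
    (K : Type*) [Field K] (n : ℕ) (hn : 3 ≤ n)
    (M : Submodule K (Matrix (Fin n) (Fin n) K))
    (hsq : ∀ X : Fin n → K,
      X ∉ Submodule.span K {(fun _ => 1 : Fin n → K)} → vecMulVec X X ∈ M) :
    ∀ A : Matrix (Fin n) (Fin n) K, A.IsSymm → A ∈ M := by
  have hcard : 2 < Fintype.card (Fin n) := by rw [Fintype.card_fin]; omega
  have hdiag : ∀ i, single i i (1 : K) ∈ M := fun i => by
    obtain ⟨k, hk, -⟩ := Fintype.exists_ne_ne_of_two_lt_card hcard i i
    rw [single_eq_single_vecMulVec_single]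
    exact hsq _ (notMem_span_const_one_of_ne (k := i) (l := k) (by simp [hk]))
  intro A hA
  refine hA.mem_of_single_mem hdiag fun i j hij => ?_
  obtain ⟨k, hki, hkj⟩ := Fintype.exists_ne_ne_of_two_lt_card hcard i j
  rw [single_add_single_eq_vecMulVec_sub]
  refine M.sub_mem (M.sub_mem (hsq _ ?_) (hdiag i)) (hdiag j)
  exact notMem_span_const_one_of_ne (k := i) (l := k) (by simp [hij, hki, hkj])

/-- If a subspace of the symmetric `n×n` matrices (`n ≥ 3`) contains `X·Xᵀ` for
every `X` outside the line spanned by the all-ones vector, then it is the full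
space of symmetric matrices. -/
theorem subspace_containing_almost_all_squares_is_full
    (K : Type*) [Field K] (n : ℕ) (hn : 3 ≤ n)
    (M : Submodule K (Matrix (Fin n) (Fin n) K))
    (hMsym : ∀ A ∈ M, A.IsSymm)
    (hsq : ∀ X : Fin n → K,
      X ∉ Submodule.span K {(fun _ => 1 : Fin n → K)} → vecMulVec X X ∈ M) :
    ∀ A : Matrix (Fin n) (Fin n) K, A.IsSymm → A ∈ M :=
  subspace_containing_almost_all_squares_is_full_general K n hn M hsq
end

section
/- Let S be a linear subspace of the n×p matrices over K and F : S → Kⁿ a range-compatible group homomorphism. Then there exist group homomorphisms F₁,…,Fₙ from the corresponding row spaces to K such that for all M ∈ S, the i-th entry of F(M) equals Fᵢ(Rᵢ(M)), where Rᵢ(M) is the i-th row of M. -/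
open Matrix

/-- A range-compatible homomorphism on a space of `n×p` matrices acts
row-wise: its `i`-th coordinate depends only on the `i`-th row, through a map
that is additive on the image of the `i`-th row projection. -/
theorem rangeCompatible_hom_rowwise
    (K : Type*) [Field K] (n p : ℕ)
    (S : Submodule K (Matrix (Fin n) (Fin p) K))
    (F : Matrix (Fin n) (Fin p) K → (Fin n → K))
    (hadd : ∀ M ∈ S, ∀ N ∈ S, F (M + N) = F M + F N)
    (hrc : ∀ M ∈ S, ∃ X : Fin p → K, M.mulVec X = F M) :
    ∃ F' : Fin n → (Fin p → K) → K,
      (∀ i : Fin n, ∀ M ∈ S, ∀ N ∈ S, F' i (M i + N i) = F' i (M i) + F' i (N i)) ∧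
      (∀ M ∈ S, ∀ i : Fin n, F M i = F' i (M i)) := by
  classical
  have key : ∀ M ∈ S, ∀ N ∈ S, ∀ i : Fin n, M i = N i → F M i = F N i := by
    intro M hM N hN i hrow
    have hMN : M - N ∈ S := S.sub_mem hM hN
    obtain ⟨X, hX⟩ := hrc (M - N) hMN
    have h0 : F (M - N) i = 0 := by
      rw [← hX]
      simp [mulVec, dotProduct, Matrix.sub_apply, hrow]
    have hdecomp : F M = F (M - N) + F N := by
      have h := hadd (M - N) hMN N hN
      rwa [sub_add_cancel] at h
    rw [hdecomp]
    simp [h0]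
  set F' : Fin n → (Fin p → K) → K := fun i v =>
    if h : ∃ M, M ∈ S ∧ M i = v then F h.choose i else 0 with hF'
  have main : ∀ i : Fin n, ∀ M ∈ S, F' i (M i) = F M i := by
    intro i M hM
    have h : ∃ M', M' ∈ S ∧ M' i = M i := ⟨M, hM, rfl⟩
    simp only [hF', dif_pos h]
    exact key _ h.choose_spec.1 M hM i h.choose_spec.2
  refine ⟨F', ?_, ?_⟩
  · intro i M hM N hN
    have hsum : (M + N) i = M i + N i := rfl
    have h1 := main i (M + N) (S.add_mem hM hN)
    rw [hsum] at h1
    rw [h1, hadd M hM N hN, main i M hM, main i N hN]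
    rfl
  · intro M hM i
    exact (main i M hM).symm
end

section
/- Let U, V be finite-dimensional K-vector spaces, S a linear subspace of L(U,V), V₀ a linear subspace of V, and π : V → V/V₀ the projection. For every range-compatible group homomorphism F : S → V there is a unique range-compatible group homomorphism G on the space S mod V₀ := {π∘s : s ∈ S} such that G(π∘s) = π(F(s)) for all s ∈ S. -/
/-- Quotient lemma: every range-compatible homomorphism `F` on `S` induces a
unique range-compatible homomorphism on `S mod V₀` making the square commute. -/
theorem rangeCompatible_hom_quotient
    (K : Type*) [Field K] (U V : Type*) [AddCommGroup U] [Module K U]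
    [AddCommGroup V] [Module K V] [FiniteDimensional K U] [FiniteDimensional K V]
    (S : Submodule K (U →ₗ[K] V)) (V₀ : Submodule K V)
    (F : ↥S →+ V)
    (hrc : ∀ s : ↥S, F s ∈ LinearMap.range (s : U →ₗ[K] V)) :
    ∃! G : ↥(S.map ((LinearMap.llcomp K U V (V ⧸ V₀)) V₀.mkQ)) →+ V ⧸ V₀,
      (∀ t : ↥(S.map ((LinearMap.llcomp K U V (V ⧸ V₀)) V₀.mkQ)),
        G t ∈ LinearMap.range (t : U →ₗ[K] V ⧸ V₀)) ∧
      (∀ s : ↥S,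
        G ⟨V₀.mkQ.comp (s : U →ₗ[K] V), ⟨(s : U →ₗ[K] V), s.2, rfl⟩⟩
          = V₀.mkQ (F s)) := by
  classical
  set φ : (U →ₗ[K] V) →ₗ[K] (U →ₗ[K] V ⧸ V₀) :=
    (LinearMap.llcomp K U V (V ⧸ V₀)) V₀.mkQ with hφ
  have hφapp : ∀ f : U →ₗ[K] V, φ f = V₀.mkQ.comp f := fun f => rfl
  -- key well-definedness lemma
  have key : ∀ s s' : ↥S,
      V₀.mkQ.comp (s : U →ₗ[K] V) = V₀.mkQ.comp (s' : U →ₗ[K] V) →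
      V₀.mkQ (F s) = V₀.mkQ (F s') := by
    intro s s' h
    have hd : ∀ u : U, ((s : U →ₗ[K] V) - (s' : U →ₗ[K] V)) u ∈ V₀ := by
      intro u
      have h1 : V₀.mkQ ((s : U →ₗ[K] V) u) = V₀.mkQ ((s' : U →ₗ[K] V) u) := by
        have := congrArg (fun f : U →ₗ[K] V ⧸ V₀ => f u) h
        simpa using this
      rw [← Submodule.Quotient.mk_eq_zero]
      simp only [LinearMap.sub_apply]
      rw [Submodule.Quotient.mk_sub, sub_eq_zero]
      simpa using h1
    have hmem : F (s - s') ∈ V₀ := by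
      obtain ⟨u, hu⟩ := hrc (s - s')
      rw [← hu]
      have : ((s - s' : ↥S) : U →ₗ[K] V) = (s : U →ₗ[K] V) - s' := rfl
      rw [this]
      exact hd u
    have : F s - F s' ∈ V₀ := by rwa [map_sub] at hmem
    have h0 : V₀.mkQ (F s - F s') = 0 := by
      rwa [Submodule.mkQ_apply, Submodule.Quotient.mk_eq_zero]
    rw [map_sub, sub_eq_zero] at h0
    exact h0
  have hsec : ∀ t : ↥(S.map φ), ∃ s : ↥S, φ (s : U →ₗ[K] V) = (t : U →ₗ[K] V ⧸ V₀) := by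
    intro t
    obtain ⟨s, hs, hst⟩ := t.2
    exact ⟨⟨s, hs⟩, hst⟩
  choose sec hsecspec using hsec
  refine ⟨AddMonoidHom.mk' (fun t => V₀.mkQ (F (sec t))) ?_, ⟨?_, ?_⟩, ?_⟩
  · intro t₁ t₂
    have h1 : V₀.mkQ.comp ((sec (t₁ + t₂) : ↥S) : U →ₗ[K] V)
        = V₀.mkQ.comp ((sec t₁ + sec t₂ : ↥S) : U →ₗ[K] V) := by
      have e1 : φ ((sec (t₁ + t₂) : ↥S) : U →ₗ[K] V) = φ ((sec t₁ + sec t₂ : ↥S) : U →ₗ[K] V) := by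
        rw [hsecspec]
        have : ((sec t₁ + sec t₂ : ↥S) : U →ₗ[K] V)
            = ((sec t₁ : ↥S) : U →ₗ[K] V) + ((sec t₂ : ↥S) : U →ₗ[K] V) := rfl
        rw [this, map_add, hsecspec, hsecspec]
        rfl
      rw [← hφapp, ← hφapp]; exact e1
    have h2 := key _ _ h1
    show V₀.mkQ (F (sec (t₁ + t₂))) = V₀.mkQ (F (sec t₁)) + V₀.mkQ (F (sec t₂))
    rw [h2, map_add, map_add]
  · intro t
    obtain ⟨u, hu⟩ := hrc (sec t)
    refine ⟨u, ?_⟩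
    have ht : (t : U →ₗ[K] V ⧸ V₀) = V₀.mkQ.comp ((sec t : ↥S) : U →ₗ[K] V) := by
      rw [← hsecspec t]; rfl
    simp only [AddMonoidHom.mk'_apply]
    rw [ht]
    simp only [LinearMap.comp_apply]
    rw [hu]
  · intro s
    simp only [AddMonoidHom.mk'_apply]
    apply key
    have := hsecspec ⟨V₀.mkQ.comp (s : U →ₗ[K] V), ⟨(s : U →ₗ[K] V), s.2, rfl⟩⟩
    rw [hφapp] at this
    exact this
  · intro G' ⟨_, hG'⟩
    ext t
    have ht : t = ⟨V₀.mkQ.comp ((sec t : ↥S) : U →ₗ[K] V),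
        ⟨((sec t : ↥S) : U →ₗ[K] V), (sec t).2, rfl⟩⟩ := by
      apply Subtype.ext
      rw [← hsecspec t]; rfl
    simp only [AddMonoidHom.mk'_apply]
    conv_lhs => rw [ht]
    rw [hG']
end

section
/- If K is not a prime field (so there exists a non-K-linear additive group endomorphism φ of K), n ≥ 2, and S = Sym₁(K) ⊕ Sym_{n−1}(K) is the space of symmetric n×n block-diagonal matrices with blocks of sizes 1 and n−1, then the map F sending M = (m_{i,j}) ∈ S to the vector (φ(m_{1,1}), 0, …, 0)ᵀ is a range-compatible group homomorphism on S that is not K-linear. -/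
/-!
On a matrix whose `j`-th column vanishes off the diagonal, `Pi.single j 1` is mapped to
`Pi.single j (M j j)`, so every vector supported at `j` lies in the range of `M` unless
`M j j = 0`; in that case `φ (M j j) = 0` as well. Additivity is inherited from `φ`, and
testing on `Matrix.single 0 0 x` shows that `K`-linearity of the map would force that of `φ`.
-/

open Matrix

namespace Matrix

variable {ι K : Type*} [DecidableEq ι]

theorem mulVec_single_of_col_eq_zero [Fintype ι] [CommSemiring K] {M : Matrix ι ι K} {j : ι}
    (hcol : ∀ i, i ≠ j → M i j = 0) (x : K) :
    M *ᵥ Pi.single j x = Pi.single j (M j j * x) := by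
  ext i
  rw [mulVec_single, Pi.smul_apply, col_apply, op_smul_eq_mul]
  by_cases h : i = j
  · subst h; simp
  · simp [h, hcol i h]

theorem exists_mulVec_eq_single_of_col_eq_zero [Fintype ι] [Field K] {M : Matrix ι ι K} {j : ι}
    (hcol : ∀ i, i ≠ j → M i j = 0) {c : K} (hc : M j j = 0 → c = 0) :
    ∃ X, M *ᵥ X = Pi.single j c := by
  by_cases h : M j j = 0
  · exact ⟨0, by simp [hc h]⟩
  · refine ⟨Pi.single j (c / M j j), ?_⟩
    rw [mulVec_single_of_col_eq_zero hcol, mul_div_cancel₀ _ h]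

theorem isSymm_single_self [Zero K] (i : ι) (x : K) : (single i i x).IsSymm :=
  transpose_single i i x

end Matrix

/-- If `φ` is a non-linear additive endomorphism of `K` and `S` is the space of
symmetric block-diagonal matrices with blocks of sizes `1` and `n-1` (here
`n = m + 2 ≥ 2`), then `M ↦ (φ(m₁₁),0,…,0)ᵀ` is a range-compatible
homomorphism on `S` that is not `K`-linear. -/
theorem nonstandard_rangeCompatible_hom_on_block_diagonal
    (K : Type*) [Field K] (φ : K →+ K)
    (hφ : ¬ ∀ lam x : K, φ (lam * x) = lam * φ x)
    (m : ℕ) :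
    (∀ M ∈ {M : Matrix (Fin (m + 2)) (Fin (m + 2)) K |
        M.IsSymm ∧ ∀ i : Fin (m + 2), i ≠ 0 → M i 0 = 0 ∧ M 0 i = 0},
      ∀ N ∈ {M : Matrix (Fin (m + 2)) (Fin (m + 2)) K |
        M.IsSymm ∧ ∀ i : Fin (m + 2), i ≠ 0 → M i 0 = 0 ∧ M 0 i = 0},
      (fun i => if i = 0 then φ ((M + N) 0 0) else 0)
        = (fun i : Fin (m + 2) => if i = 0 then φ (M 0 0) else 0)
          + (fun i : Fin (m + 2) => if i = 0 then φ (N 0 0) else 0)) ∧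
    (∀ M ∈ {M : Matrix (Fin (m + 2)) (Fin (m + 2)) K |
        M.IsSymm ∧ ∀ i : Fin (m + 2), i ≠ 0 → M i 0 = 0 ∧ M 0 i = 0},
      ∃ X : Fin (m + 2) → K,
        M.mulVec X = fun i => if i = 0 then φ (M 0 0) else 0) ∧
    ¬ (∀ M ∈ {M : Matrix (Fin (m + 2)) (Fin (m + 2)) K |
        M.IsSymm ∧ ∀ i : Fin (m + 2), i ≠ 0 → M i 0 = 0 ∧ M 0 i = 0},
      ∀ lam : K,
        (fun i : Fin (m + 2) => if i = 0 then φ ((lam • M) 0 0) else 0)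
          = lam • fun i : Fin (m + 2) => if i = 0 then φ (M 0 0) else 0) := by
  simp only [← Pi.single_apply]
  eta_reduce
  refine ⟨fun M _ N _ => ?_, fun M hM => ?_, fun H => hφ fun lam x => ?_⟩
  · rw [Matrix.add_apply, map_add, Pi.single_add]
  · exact exists_mulVec_eq_single_of_col_eq_zero (fun i hi => (hM.2 i hi).1)
      fun h => by rw [h, map_zero]
  · have hx : single 0 0 x ∈ {M : Matrix (Fin (m + 2)) (Fin (m + 2)) K |
        M.IsSymm ∧ ∀ i : Fin (m + 2), i ≠ 0 → M i 0 = 0 ∧ M 0 i = 0} :=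
      ⟨isSymm_single_self 0 x, fun i hi => by simp [Ne.symm hi]⟩
    have := H _ hx lam
    rwa [Matrix.smul_apply, single_apply_same, ← Pi.single_smul', Pi.single_inj, smul_eq_mul,
      smul_eq_mul] at this
end

section
/- Let U₂ be the space of 2×2 matrices of the form [[a,b],[b,0]] with a,b ∈ K. Then the linear map F : [[a,b],[b,0]] ↦ (a,0)ᵀ is range-compatible on U₂ but not local. -/
open Matrix

/-- On the space `U₂` of matrices `[[a,b],[b,0]]`, the map
`[[a,b],[b,0]] ↦ (a,0)ᵀ` is range-compatible but not local. -/
theorem U2_rangeCompatible_not_local (K : Type*) [Field K] :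
    (∀ a b : K, ∃ X : Fin 2 → K,
      (!![a, b; b, 0] : Matrix (Fin 2) (Fin 2) K).mulVec X = ![a, 0]) ∧
    ¬ (∃ X : Fin 2 → K, ∀ a b : K,
      (!![a, b; b, 0] : Matrix (Fin 2) (Fin 2) K).mulVec X = ![a, 0]) := by
  constructor
  · intro a b
    by_cases hb : b = 0
    · exact ⟨![1, 0], by subst hb; funext i; fin_cases i <;>
        simp [mulVec, dotProduct, Fin.sum_univ_two]⟩
    · refine ⟨![0, a / b], ?_⟩
      funext i; fin_cases i <;>
        simp [mulVec, dotProduct, Fin.sum_univ_two, hb, mul_div_cancel₀]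
  · rintro ⟨X, hX⟩
    have h1 := congrFun (hX 1 1) 1
    have h0 := congrFun (hX 1 0) 0
    simp [mulVec, dotProduct, Fin.sum_univ_two] at h1 h0
    rw [h0] at h1
    exact one_ne_zero h1
end

section
/- Let K have characteristic 2 and n ≥ 2. For any root-linear map α : K → K, the map M ↦ Δ(M)^α sending a symmetric matrix M = (m_{i,j}) to the vector (α(m_{1,1}), …, α(m_{n,n}))ᵀ is a range-compatible group homomorphism on Symₙ(K). -/
open Matrix Finset

/-- In char 2, for symmetric `M`, the quadratic form collapses to the diagonal. -/
lemma quad_diag_char2 {K : Type*} [Field K] [CharP K 2] {n : ℕ}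
    (M : Matrix (Fin n) (Fin n) K) (hM : M.IsSymm) (u : Fin n → K) :
    u ⬝ᵥ M.mulVec u = ∑ i, u i ^ 2 * M i i := by
  have hoff : ∑ p ∈ (univ : Finset (Fin n)).offDiag, u p.1 * M p.1 p.2 * u p.2 = 0 := by
    refine Finset.sum_involution (fun p _ => (p.2, p.1)) ?_ ?_ ?_ ?_
    · intro p _
      have : u p.2 * M p.2 p.1 * u p.1 = u p.1 * M p.1 p.2 * u p.2 := by
        rw [hM.apply p.1 p.2]; ring
      rw [this, CharTwo.add_self_eq_zero]
    · intro p hp _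
      have h12 : p.1 ≠ p.2 := (Finset.mem_offDiag.mp hp).2.2
      intro h
      have : p.2 = p.1 := congrArg Prod.fst h
      exact h12 this.symm
    · intro p hp
      have h := Finset.mem_offDiag.mp hp
      exact Finset.mem_offDiag.mpr ⟨h.2.1, h.1, fun e => h.2.2 e.symm⟩
    · intro p _; rfl
  have hsplit : ∑ p ∈ (univ : Finset (Fin n)) ×ˢ univ, u p.1 * M p.1 p.2 * u p.2
      = ∑ p ∈ (univ : Finset (Fin n)).diag, u p.1 * M p.1 p.2 * u p.2 + 
        ∑ p ∈ (univ : Finset (Fin n)).offDiag, u p.1 * M p.1 p.2 * u p.2 := by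
    rw [← Finset.sum_union (Finset.disjoint_diag_offDiag _), Finset.diag_union_offDiag]
  have hdiag : ∑ p ∈ (univ : Finset (Fin n)).diag, u p.1 * M p.1 p.2 * u p.2
      = ∑ i, u i ^ 2 * M i i := by
    rw [Finset.sum_diag]
    exact Finset.sum_congr rfl fun i _ => by ring
  calc u ⬝ᵥ M.mulVec u = ∑ i, ∑ j, u i * M i j * u j := by
        simp [dotProduct, mulVec, Finset.mul_sum, mul_assoc]
    _ = ∑ p ∈ (univ : Finset (Fin n)) ×ˢ univ, u p.1 * M p.1 p.2 * u p.2 := by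
        rw [Finset.sum_product]
    _ = ∑ i, u i ^ 2 * M i i := by rw [hsplit, hdiag, hoff, add_zero]

/-- In characteristic 2, for a root-linear map `α : K → K`, the map
`M ↦ Δ(M)^α` is a range-compatible group homomorphism on `Symₙ(K)`. -/
theorem diag_rootLinear_is_rangeCompatible
    (K : Type*) [Field K] [CharP K 2] (n : ℕ) (hn : 2 ≤ n)
    (α : K →+ K) (hroot : ∀ lam x : K, α (lam ^ 2 * x) = lam * α x) :
    (∀ M N : Matrix (Fin n) (Fin n) K, M.IsSymm → N.IsSymm →
      (fun i => α ((M + N) i i))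
        = (fun i : Fin n => α (M i i)) + fun i : Fin n => α (N i i)) ∧
    (∀ M : Matrix (Fin n) (Fin n) K, M.IsSymm →
      ∃ X : Fin n → K, M.mulVec X = fun i => α (M i i)) := by
  constructor
  · intro M N _ _
    funext i
    simp [Matrix.add_apply, map_add]
  · intro M hM
    set v : Fin n → K := fun i => α (M i i) with hv
    suffices h : v ∈ LinearMap.range M.mulVecLin by
      obtain ⟨X, hX⟩ := h
      exact ⟨X, hX⟩
    rw [← Subspace.forall_mem_dualAnnihilator_apply_eq_zero_iff]
    intro φ hφ
    rw [Submodule.mem_dualAnnihilator] at hφ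
    set u : Fin n → K := fun i => φ (fun j => if i = j then 1 else 0) with hu
    have hφeq : ∀ w, φ w = ∑ i, w i * u i := by
      intro w
      rw [LinearMap.pi_apply_eq_sum_univ φ w]
      simp [smul_eq_mul, hu]
    have hMu : M.mulVec u = 0 := by
      funext j
      have h1 : φ (M.mulVec (Pi.single j 1)) = 0 :=
        hφ _ ⟨Pi.single j 1, rfl⟩
      rw [hφeq] at h1
      have h2 : ∀ i, M.mulVec (Pi.single j 1) i = M i j := by
        intro i; rw [Matrix.mulVec_single]; simp
      calc M.mulVec u j = ∑ i, M j i * u i := by simp [mulVec, dotProduct]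
        _ = ∑ i, M.mulVec (Pi.single j 1) i * u i := by
            refine Finset.sum_congr rfl fun i _ => by rw [h2 i, hM.apply]
        _ = 0 := h1
    have hquad : ∑ i, u i ^ 2 * M i i = 0 := by
      rw [← quad_diag_char2 M hM u, hMu]
      simp
    have : φ v = 0 := by
      rw [hφeq]
      calc ∑ i, v i * u i = ∑ i, α (u i ^ 2 * M i i) := by
            refine Finset.sum_congr rfl fun i _ => ?_
            rw [hroot, hv, mul_comm]
        _ = α (∑ i, u i ^ 2 * M i i) := by rw [map_sum]
        _ = 0 := by rw [hquad, map_zero]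
    exact this
end
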